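/- For all n ≥ 0, the degenerate ordered Bell number satisfies b_{n,λ} = Σ_{k=0}^n λ^{n-k} S_1(n,k) H_k(2), where H_k(2) are the Frobenius–Euler numbers at u = 2. -/

import Mathlib

noncomputable def logOneAdd : PowerSeries ℚ :=
  PowerSeries.mk fun m => if m = 0 then 0 else (-1 : ℚ) ^ (m + 1) / m

/-- The signed Stirling numbers of the first kind. -/
noncomputable def S1 (n k : ℕ) : ℚ :=
  (n.factorial : ℚ) * PowerSeries.coeff (R := ℚ) n ((k.factorial : ℚ)⁻¹ • logOneAdd ^ k)

/-!
Let `L(x) = log(1 + λx)/λ`. Both `exp ∘ L` and the degenerate exponential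
`e_λ(x) = (1 + λx)^{1/λ}` solve `(1 + λx) F' = F` with `F(0) = 1`, so `exp ∘ L = e_λ`.
Substituting `L` into the Frobenius–Euler relation `H(x) (eˣ - 2) = -1` therefore gives
`H(L(x)) (e_λ(x) - 2) = -1`, so the ordered Bell series is `H ∘ L`. Its `n`-th coefficient is
read off from `L^k`, whose `n`-th coefficient is `λ^{n-k}` times that of `log(1 + x)^k`,
that is `λ^{n-k} k! S₁(n,k) / n!`.
-/

open PowerSeries Finset

namespace PowerSeries

variable {R : Type*} [CommRing R]

theorem coeff_X_mul_pow_of_lt (g : R⟦X⟧) {n k : ℕ} (h : n < k) :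
    coeff n ((X * g) ^ k) = 0 := by
  rw [mul_pow, coeff_X_pow_mul', if_neg (by omega)]

theorem coeff_X_mul_rescale_pow (a : R) (g : R⟦X⟧) (k n : ℕ) :
    coeff n ((X * rescale a g) ^ k) = a ^ (n - k) * coeff n ((X * g) ^ k) := by
  rw [mul_pow, mul_pow, ← map_pow, coeff_X_pow_mul', coeff_X_pow_mul']
  split_ifs
  · rw [coeff_rescale]
  · rw [mul_zero]

theorem coeff_subst_X_mul (f g : R⟦X⟧) (n : ℕ) :
    coeff n (f.subst (X * g)) = ∑ k ∈ range (n + 1), coeff k f * coeff n ((X * g) ^ k) := by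
  rw [coeff_subst' (HasSubst.of_constantCoeff_zero' (by simp)),
    finsum_eq_sum_of_support_subset _ (s := range (n + 1))]
  · simp only [smul_eq_mul]
  · intro k hk
    rw [Function.mem_support] at hk
    rw [coe_range, Set.mem_Iio]
    by_contra h
    exact hk (by rw [coeff_X_mul_pow_of_lt g (by omega), smul_zero])

theorem coeff_X_mul_derivative (f : R⟦X⟧) (n : ℕ) :
    coeff n (X * d⁄dX R f) = n * coeff n f := by
  cases n with
  | zero => simp
  | succ n => rw [coeff_succ_X_mul, coeff_derivative]; push_cast; ring

theorem one_add_C_mul_X_mul_derivative_eq_self_iff (c : R) (F : R⟦X⟧) :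
    (1 + C c * X) * d⁄dX R F = F ↔
      ∀ n : ℕ, coeff (n + 1) F * (n + 1) = (1 - c * n) * coeff n F := by
  rw [PowerSeries.ext_iff]
  refine forall_congr' fun n => ?_
  rw [add_mul, one_mul, mul_assoc, map_add, coeff_C_mul, coeff_X_mul_derivative,
    coeff_derivative]
  constructor <;> intro h <;> linear_combination h

theorem eq_of_one_add_C_mul_X_mul_derivative_eq_self [IsAddTorsionFree R] (c : R) {F G : R⟦X⟧}
    (hF : (1 + C c * X) * d⁄dX R F = F) (hG : (1 + C c * X) * d⁄dX R G = G)
    (h0 : constantCoeff F = constantCoeff G) : F = G := by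
  rw [one_add_C_mul_X_mul_derivative_eq_self_iff] at hF hG
  ext n
  induction n with
  | zero => simpa using h0
  | succ n ih =>
    apply nsmul_right_injective n.succ_ne_zero
    simp only [nsmul_eq_mul, Nat.cast_succ]
    linear_combination hF n - hG n + (1 - c * n) * ih

end PowerSeries

noncomputable def degenerateExp (lam : ℚ) : ℚ⟦X⟧ :=
  PowerSeries.mk fun m => (m.factorial : ℚ)⁻¹ * ∏ i ∈ range m, (1 - (i : ℚ) * lam)

-- `log (1 + λ x) / λ`, in a form that also makes sense at `λ = 0`.
noncomputable def scaledLog (lam : ℚ) : ℚ⟦X⟧ :=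
  X * rescale lam (PowerSeries.mk fun m => coeff (m + 1) logOneAdd)

theorem X_mul_shift_logOneAdd :
    X * PowerSeries.mk (fun m => coeff (m + 1) logOneAdd) = logOneAdd := by
  conv_rhs => rw [eq_X_mul_shift_add_const logOneAdd]
  simp [logOneAdd, ← coeff_zero_eq_constantCoeff_apply]

theorem hasSubst_scaledLog (lam : ℚ) : HasSubst (scaledLog lam) :=
  HasSubst.of_constantCoeff_zero' (by simp [scaledLog])

theorem coeff_scaledLog_pow (lam : ℚ) (k n : ℕ) :
    coeff n (scaledLog lam ^ k) = lam ^ (n - k) * coeff n (logOneAdd ^ k) := by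
  rw [scaledLog, coeff_X_mul_rescale_pow, X_mul_shift_logOneAdd]

theorem coeff_subst_scaledLog (lam : ℚ) (f : ℚ⟦X⟧) (n : ℕ) :
    coeff n (f.subst (scaledLog lam)) =
      ∑ k ∈ range (n + 1), coeff k f * (lam ^ (n - k) * coeff n (logOneAdd ^ k)) := by
  simp only [scaledLog, coeff_subst_X_mul, ← coeff_scaledLog_pow]

theorem derivative_scaledLog (lam : ℚ) :
    d⁄dX ℚ (scaledLog lam) = PowerSeries.mk fun n => (-lam) ^ n := by
  ext n
  have hn : (n : ℚ) + 1 ≠ 0 := by positivity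
  rw [coeff_derivative, scaledLog, coeff_succ_X_mul, coeff_rescale]
  simp only [coeff_mk, logOneAdd, Nat.add_eq_zero_iff, one_ne_zero, and_false, if_false]
  push_cast
  field_simp
  rw [neg_pow]
  ring

theorem one_add_C_mul_X_mul_derivative_scaledLog (lam : ℚ) :
    (1 + C lam * X) * d⁄dX ℚ (scaledLog lam) = 1 := by
  ext (_ | n)
  · simp [derivative_scaledLog]
  · rw [derivative_scaledLog, add_mul, one_mul, mul_assoc, map_add, coeff_C_mul,
      coeff_succ_X_mul]
    simp only [coeff_mk, coeff_one, n.succ_ne_zero, if_false, pow_succ]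
    ring

theorem one_add_C_mul_X_mul_derivative_degenerateExp (lam : ℚ) :
    (1 + C lam * X) * d⁄dX ℚ (degenerateExp lam) = degenerateExp lam := by
  rw [one_add_C_mul_X_mul_derivative_eq_self_iff]
  intro n
  simp only [degenerateExp, coeff_mk, prod_range_succ, Nat.factorial_succ]
  -- keeps `field_simp` from normalizing the two copies of the product differently
  set P := ∏ i ∈ range n, (1 - (i : ℚ) * lam)
  push_cast
  field_simp

theorem exp_subst_scaledLog (lam : ℚ) : (exp ℚ).subst (scaledLog lam) = degenerateExp lam := by
  apply eq_of_one_add_C_mul_X_mul_derivative_eq_self lam _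
    (one_add_C_mul_X_mul_derivative_degenerateExp lam)
  · rw [← coeff_zero_eq_constantCoeff_apply, ← coeff_zero_eq_constantCoeff_apply,
      coeff_subst_scaledLog]
    simp [degenerateExp]
  · rw [derivative_subst (hasSubst_scaledLog lam), derivative_exp, mul_left_comm,
      one_add_C_mul_X_mul_derivative_scaledLog, mul_one]

theorem two_sub_degenerateExp_mul_subst_scaledLog (lam : ℚ) {f : ℚ⟦X⟧}
    (hf : f * (exp ℚ - C 2) = C (1 - 2)) :
    (2 - degenerateExp lam) * f.subst (scaledLog lam) = 1 := by
  have hL := hasSubst_scaledLog lam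
  have h := congrArg (subst (scaledLog lam)) hf
  rw [subst_mul hL, subst_sub hL, subst_C, subst_C, exp_subst_scaledLog, map_ofNat,
    show (1 : ℚ) - 2 = -1 by norm_num, map_neg, map_one] at h
  linear_combination (-1 : ℚ⟦X⟧) * h

/-- The degenerate ordered Bell numbers `b_{n,λ}` (defined by
`1/(2-(1+λx)^{1/λ}) = Σ_n b_{n,λ} x^n/n!`) satisfy
`b_{n,λ} = Σ_{k=0}^n λ^{n-k} S₁(n,k) H_k(2)`, where `H_k(2)` are the
Frobenius–Euler numbers at `u = 2`: `(1-2)/(e^x - 2) = Σ_k H_k(2) x^k/k!`. -/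
theorem degenerate_ordered_Bell_frobenius (lam : ℚ) (b H : ℕ → ℚ)
    (hb : (PowerSeries.mk fun n => (n.factorial : ℚ)⁻¹ * b n) *
        (2 - PowerSeries.mk fun m =>
          (m.factorial : ℚ)⁻¹ * ∏ i ∈ Finset.range m, (1 - (i : ℚ) * lam))
      = 1)
    (hH : (PowerSeries.mk fun k => (k.factorial : ℚ)⁻¹ * H k) *
        (PowerSeries.exp ℚ - PowerSeries.C (R := ℚ) 2) = PowerSeries.C (R := ℚ) (1 - 2)) :
    ∀ n, b n = ∑ k ∈ Finset.range (n + 1), lam ^ (n - k) * S1 n k * H k := by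
  intro n
  have hB := congrArg (coeff n) <|
    left_inv_eq_right_inv hb (two_sub_degenerateExp_mul_subst_scaledLog lam hH)
  rw [coeff_mk, coeff_subst_scaledLog, inv_mul_eq_iff_eq_mul₀ (by positivity), mul_sum] at hB
  rw [hB]
  refine sum_congr rfl fun k _ => ?_
  rw [S1, coeff_smul, coeff_mk, smul_eq_mul]
  ring
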